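/- arXiv:2009.05480 — 3 statements merged into one kernel-verified Lean document; each statement's English description precedes it below -/
import Mathlib

section
/- Let (N_i)_{i≥1} be a strictly increasing sequence of positive integers such that for every d ∈ ℕ, eventually N_i > 2 d N_{i-1}. Define the power series f(x) = Σ_{i>0} t^i P_{N_i}(x) over ℂ[[t]], where P_k(x) = x^k ∏_{j=1}^{k} (x - j). Then f, viewed as an element of ℂ[[t]][[x]], is transcendental over ℂ((t))(x); i.e., f satisfies no nonzero polynomial relation over the field of Laurent series in t with x adjoined. -/
/-!
Suppose `Q(f) = 0`. It suffices to show `Q'(f) = 0`: iterating reaches a nonzero constant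
unless `Q = 0` (characteristic zero). If `G = Q'(f) ≠ 0`, let `t^w x^α` be its lexicographically
least monomial (least in `t` first). For large `m`, Taylor expansion at the partial sum `f_m` gives
`0 = Q(f_m) + Q'(f_m) g + k g²` with `g = f - f_m = t^(m+1) P_{N_{m+1}} + O(t^(m+2))`. Look at the
coefficient of `t^(w+m+1) x^(α+N_{m+1})`: the last term does not reach it since `t^(2m+2) ∣ g²`;
the first does not since the gap `N_{m+1} > 2 d N_m` exceeds the `x`-degree of `Q(f_m)`; and the
middle term contributes the initial coefficient of `G` times the lowest coefficient
`∏ (-j) ≠ 0` of `P_{N_{m+1}}`.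
-/

open PowerSeries

/-- `P_k(x) = x^k ∏_{j=1}^k (x - j)`. -/
noncomputable def lacunaryPoly (k : ℕ) : Polynomial ℂ :=
  Polynomial.X ^ k * ∏ j ∈ Finset.range k, (Polynomial.X - Polynomial.C ((j : ℂ) + 1))

/-- The power series `f(x) = Σ_{i>0} t^i P_{N_i}(x)`, viewed as an element of
`ℂ[[t]][[x]]`: the coefficient of `x^j` is the power series
`Σ_i t^i · (coefficient of x^j in P_{N_i}) ∈ ℂ[[t]]` (a finite sum, since
`N_i ≥ i` forces `i ≤ j` for nonzero contributions when `N` is strictly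
increasing with `N 1 ≥ 1`). -/
noncomputable def lacunarySeries (N : ℕ → ℕ) : PowerSeries (PowerSeries ℂ) :=
  PowerSeries.mk fun j =>
    ∑ i ∈ Finset.Icc 1 j,
      (PowerSeries.X : PowerSeries ℂ) ^ i *
        (PowerSeries.C : ℂ →+* PowerSeries ℂ) ((lacunaryPoly (N i)).coeff j)

open scoped Polynomial

instance PowerSeries.charZero {R : Type*} [CommSemiring R] [CharZero R] : CharZero R⟦X⟧ :=
  RingHom.charZero constantCoeff

namespace Polynomial

variable {R S : Type*}

theorem eq_zero_of_eval₂_eq_zero_of_derivative [Semiring R] [IsAddTorsionFree R] [Semiring S]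
    {φ : R →+* S} (hφ : Function.Injective φ) {x : S}
    (hder : ∀ Q : R[X], Q.eval₂ φ x = 0 → Q.derivative.eval₂ φ x = 0)
    {Q : R[X]} (hQ : Q.eval₂ φ x = 0) : Q = 0 := by
  induction h : Q.natDegree using Nat.strong_induction_on generalizing Q with
  | _ n ih =>
    by_cases h0 : Q.natDegree = 0
    · rw [eq_C_of_natDegree_eq_zero h0, eval₂_C, ← map_zero φ] at hQ
      rw [eq_C_of_natDegree_eq_zero h0, hφ hQ, C_0]
    · have hQ' : Q.derivative = 0 := ih _ (h ▸ natDegree_derivative_lt h0) (hder Q hQ) rfl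
      exact absurd (derivative_eq_zero.1 hQ') h0

theorem sub_dvd_eval₂_sub [CommSemiring R] [CommRing S] (φ : R →+* S) (x y : S) (Q : R[X]) :
    x - y ∣ Q.eval₂ φ x - Q.eval₂ φ y := by
  simpa only [eval_map] using sub_dvd_eval_sub x y (Q.map φ)

theorem exists_eval₂_add_eq [CommSemiring R] [CommRing S] (φ : R →+* S) (Q : R[X]) (x y : S) :
    ∃ k : S, Q.eval₂ φ (x + y) = Q.eval₂ φ x + Q.derivative.eval₂ φ x * y + k * y ^ 2 := by
  obtain ⟨k, hk⟩ := binomExpansion (Q.map φ) x y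
  exact ⟨k, by simpa only [eval_map, derivative_map] using hk⟩

theorem natDegree_eval_le [Semiring R] (Q : R[X][X]) (p : R[X]) :
    (Q.eval p).natDegree ≤
      Q.support.sup (fun k => (Q.coeff k).natDegree) + Q.natDegree * p.natDegree := by
  rw [eval_eq_sum, Polynomial.sum_def]
  refine natDegree_sum_le_of_forall_le _ _ fun k hk => natDegree_mul_le.trans ?_
  have := Finset.le_sup (f := fun k => (Q.coeff k).natDegree) hk
  have := Nat.mul_le_mul_right p.natDegree (le_natDegree_of_mem_supp k hk)
  have := natDegree_pow_le (p := p) (n := k)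
  omega

end Polynomial

namespace PowerSeries

section CommSemiring

variable {R : Type*} [CommSemiring R]

theorem C_dvd_iff_dvd_coeff (c : R) (F : R⟦X⟧) : C c ∣ F ↔ ∀ n, c ∣ coeff n F := by
  constructor
  · rintro ⟨G, rfl⟩ n
    exact ⟨coeff n G, coeff_C_mul n G c⟩
  · intro h
    choose G hG using h
    exact ⟨mk G, ext fun n => by rw [coeff_C_mul, coeff_mk, hG]⟩

theorem coeff_add_mul_of_X_pow_dvd {u v : R⟦X⟧} {a b : ℕ} (hu : X ^ a ∣ u) (hv : X ^ b ∣ v) :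
    coeff (a + b) (u * v) = coeff a u * coeff b v := by
  obtain ⟨u, rfl⟩ := hu
  obtain ⟨v, rfl⟩ := hv
  rw [mul_mul_mul_comm, ← pow_add, add_comm a b]
  simp [coeff_X_pow_mul']

theorem coeff_sum_X_pow_mul_C (s : Finset ℕ) (c : ℕ → R) (n : ℕ) :
    coeff n (∑ i ∈ s, X ^ i * C (c i)) = if n ∈ s then c n else 0 := by
  simp [map_sum, coeff_X_pow, mul_comm]

/-- For `F ∈ R⟦t⟧⟦x⟧`, the coefficient of `t ^ a`, as a series in `x`. -/
noncomputable def tCoeff (a : ℕ) (F : R⟦X⟧⟦X⟧) : R⟦X⟧ :=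
  mk fun p => coeff a (coeff p F)

@[simp]
theorem coeff_tCoeff (a p : ℕ) (F : R⟦X⟧⟦X⟧) : coeff p (tCoeff a F) = coeff a (coeff p F) :=
  coeff_mk _ _

theorem tCoeff_add_mul {F G : R⟦X⟧⟦X⟧} {a b : ℕ} (hF : C (X ^ a) ∣ F) (hG : C (X ^ b) ∣ G) :
    tCoeff (a + b) (F * G) = tCoeff a F * tCoeff b G := by
  ext p
  rw [coeff_tCoeff, coeff_mul p F G, coeff_mul p (tCoeff a F), map_sum]
  simp only [coeff_tCoeff]
  exact Finset.sum_congr rfl fun q _ => coeff_add_mul_of_X_pow_dvd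
    ((C_dvd_iff_dvd_coeff _ F).1 hF q.1) ((C_dvd_iff_dvd_coeff _ G).1 hG q.2)

theorem coeff_coeff_eq_zero_of_C_X_pow_dvd {F : R⟦X⟧⟦X⟧} {a n : ℕ} (hF : C (X ^ a) ∣ F)
    (hn : n < a) (p : ℕ) : coeff n (coeff p F) = 0 :=
  X_pow_dvd_iff.1 ((C_dvd_iff_dvd_coeff _ F).1 hF p) n hn

theorem exists_lex_initial_term {F : R⟦X⟧⟦X⟧} (hF : F ≠ 0) :
    ∃ a α : ℕ, C (X ^ a) ∣ F ∧ X ^ α ∣ tCoeff a F ∧ coeff α (tCoeff a F) ≠ 0 := by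
  classical
  have hex : ∃ a, tCoeff a F ≠ 0 := by
    by_contra! h
    exact hF (ext fun p => ext fun a => by simpa using congr(coeff p $(h a)))
  refine ⟨Nat.find hex, _, (C_dvd_iff_dvd_coeff _ F).2 fun p => X_pow_dvd_iff.2 fun n hn => ?_,
    X_pow_order_dvd, coeff_order (Nat.find_spec hex)⟩
  simpa using congr(coeff p $(not_not.1 (Nat.find_min hex hn)))

end CommSemiring

theorem tCoeff_eq_of_C_X_pow_dvd_sub {R : Type*} [CommRing R] {F G : R⟦X⟧⟦X⟧} {a b : ℕ}
    (h : C (X ^ b) ∣ F - G) (hab : a < b) : tCoeff a F = tCoeff a G := by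
  ext p
  rw [coeff_tCoeff, coeff_tCoeff, ← sub_eq_zero, ← map_sub, ← map_sub]
  exact coeff_coeff_eq_zero_of_C_X_pow_dvd h hab p

end PowerSeries

theorem natDegree_lacunaryPoly (k : ℕ) : (lacunaryPoly k).natDegree = 2 * k := by
  have hprod := Polynomial.monic_prod_of_monic (Finset.range k)
    (fun j => Polynomial.X - Polynomial.C ((j : ℂ) + 1)) fun j _ => Polynomial.monic_X_sub_C _
  rw [lacunaryPoly, (Polynomial.monic_X_pow k).natDegree_mul hprod, Polynomial.natDegree_X_pow,
    Polynomial.natDegree_prod _ _ fun j _ => Polynomial.X_sub_C_ne_zero _,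
    Finset.sum_congr rfl fun j _ => Polynomial.natDegree_X_sub_C _]
  simp [two_mul]

theorem X_pow_dvd_lacunaryPoly (k : ℕ) : Polynomial.X ^ k ∣ lacunaryPoly k :=
  dvd_mul_right _ _

theorem coeff_lacunaryPoly_self_ne_zero (k : ℕ) : (lacunaryPoly k).coeff k ≠ 0 := by
  rw [lacunaryPoly, Polynomial.coeff_X_pow_mul', if_pos le_rfl, Nat.sub_self,
    Polynomial.coeff_zero_eq_eval_zero, Polynomial.eval_prod]
  refine Finset.prod_ne_zero_iff.2 fun j _ => ?_
  simpa only [Polynomial.eval_sub, Polynomial.eval_X, Polynomial.eval_C, zero_sub, neg_ne_zero]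
    using Nat.cast_add_one_ne_zero j

noncomputable def lacunaryTrunc (N : ℕ → ℕ) (m : ℕ) : Polynomial ℂ⟦X⟧ :=
  ∑ i ∈ Finset.Icc 1 m, Polynomial.C (X ^ i) * (lacunaryPoly (N i)).map C

namespace LacunarySeries

variable {N : ℕ → ℕ}

theorem natDegree_lacunaryTrunc_le (hN : Monotone N) (m : ℕ) :
    (lacunaryTrunc N m).natDegree ≤ 2 * N m := by
  refine Polynomial.natDegree_sum_le_of_forall_le _ _ fun i hi => ?_
  refine Polynomial.natDegree_mul_le.trans ?_
  rw [Polynomial.natDegree_C, zero_add]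
  refine Polynomial.natDegree_map_le.trans ?_
  rw [natDegree_lacunaryPoly]
  exact Nat.mul_le_mul_left 2 (hN (Finset.mem_Icc.1 hi).2)

theorem coeff_coeff_lacunarySeries (j n : ℕ) :
    coeff n (coeff j (lacunarySeries N)) =
      if n ∈ Finset.Icc 1 j then (lacunaryPoly (N n)).coeff j else 0 := by
  rw [lacunarySeries, coeff_mk, coeff_sum_X_pow_mul_C]

theorem coeff_coeff_lacunaryTrunc (m j n : ℕ) :
    coeff n ((lacunaryTrunc N m).coeff j) =
      if n ∈ Finset.Icc 1 m then (lacunaryPoly (N n)).coeff j else 0 := by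
  simp only [lacunaryTrunc, Polynomial.finsetSum_coeff, Polynomial.coeff_C_mul,
    Polynomial.coeff_map, coeff_sum_X_pow_mul_C]

theorem coeff_coeff_lacunarySeries_sub_lacunaryTrunc (hN : StrictMono N) (m j n : ℕ) :
    coeff n (coeff j (lacunarySeries N - (lacunaryTrunc N m : ℂ⟦X⟧⟦X⟧))) =
      if m < n then (lacunaryPoly (N n)).coeff j else 0 := by
  have hvanish : j < n → (lacunaryPoly (N n)).coeff j = 0 := fun h =>
    Polynomial.X_pow_dvd_iff.1 (X_pow_dvd_lacunaryPoly _) j (h.trans_le (hN.id_le n))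
  rw [map_sub, map_sub, Polynomial.coeff_coe, coeff_coeff_lacunarySeries,
    coeff_coeff_lacunaryTrunc]
  simp only [Finset.mem_Icc]
  split_ifs <;> grind

theorem C_X_pow_dvd_lacunarySeries_sub_lacunaryTrunc (hN : StrictMono N) (m : ℕ) :
    C (X ^ (m + 1)) ∣ lacunarySeries N - (lacunaryTrunc N m : ℂ⟦X⟧⟦X⟧) :=
  (C_dvd_iff_dvd_coeff _ _).2 fun j => X_pow_dvd_iff.2 fun n hn => by
    rw [coeff_coeff_lacunarySeries_sub_lacunaryTrunc hN, if_neg (by omega)]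

theorem tCoeff_lacunarySeries_sub_lacunaryTrunc (hN : StrictMono N) (m : ℕ) :
    tCoeff (m + 1) (lacunarySeries N - (lacunaryTrunc N m : ℂ⟦X⟧⟦X⟧)) =
      (lacunaryPoly (N (m + 1)) : ℂ⟦X⟧) := by
  ext j
  rw [coeff_tCoeff, coeff_coeff_lacunarySeries_sub_lacunaryTrunc hN, if_pos m.lt_succ_self,
    Polynomial.coeff_coe]

theorem coeff_eval_lacunaryTrunc_eq_zero (hN : StrictMono N) (Q : Polynomial (Polynomial ℂ⟦X⟧))
    {m J : ℕ} (hm : 1 ≤ m)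
    (hgap : 2 * (Q.natDegree + Q.support.sup fun k => (Q.coeff k).natDegree) * N m < N (m + 1))
    (hJ : N (m + 1) ≤ J) : (Q.eval (lacunaryTrunc N m)).coeff J = 0 := by
  set D := Q.support.sup fun k => (Q.coeff k).natDegree
  have hNm : 1 ≤ N m := hm.trans (hN.id_le m)
  refine Polynomial.coeff_eq_zero_of_natDegree_lt (lt_of_lt_of_le ?_ hJ)
  calc (Q.eval (lacunaryTrunc N m)).natDegree
      ≤ D + Q.natDegree * (2 * N m) :=
        (Polynomial.natDegree_eval_le _ _).trans
          (by gcongr; exact natDegree_lacunaryTrunc_le hN.monotone m)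
    _ < N (m + 1) := by nlinarith [Nat.mul_le_mul_left D hNm]

theorem eval₂_derivative_lacunarySeries_eq_zero (hN : StrictMono N)
    (hgrow : ∀ d : ℕ, ∃ I : ℕ, ∀ i ≥ I, 2 * d * N i < N (i + 1))
    {Q : Polynomial (Polynomial ℂ⟦X⟧)}
    (hQ : Q.eval₂ Polynomial.coeToPowerSeries.ringHom (lacunarySeries N) = 0) :
    Q.derivative.eval₂ Polynomial.coeToPowerSeries.ringHom (lacunarySeries N) = 0 := by
  set φ := Polynomial.coeToPowerSeries.ringHom (R := ℂ⟦X⟧)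
  set f := lacunarySeries N
  set G := Q.derivative.eval₂ φ f
  by_contra hG
  obtain ⟨w, α, hGw, hα, hGα⟩ := exists_lex_initial_term hG
  obtain ⟨I, hI⟩ := hgrow (Q.natDegree + Q.support.sup fun k => (Q.coeff k).natDegree)
  set m := I + w + 1
  set q := lacunaryTrunc N m
  set g := f - (q : ℂ⟦X⟧⟦X⟧)
  set F := Q.derivative.eval₂ φ (φ q)
  have hg : C (X ^ (m + 1)) ∣ g := C_X_pow_dvd_lacunarySeries_sub_lacunaryTrunc hN m
  have hGF : C (X ^ (m + 1)) ∣ G - F := hg.trans (Polynomial.sub_dvd_eval₂_sub φ f (φ q) _)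
  have hFw : C (X ^ w) ∣ F := by
    rw [← sub_sub_cancel G F]
    exact dvd_sub hGw ((map_dvd C (pow_dvd_pow X (by omega))).trans hGF)
  have htCoeff : tCoeff w G = tCoeff w F := tCoeff_eq_of_C_X_pow_dvd_sub hGF (by omega)
  have hP : X ^ N (m + 1) ∣ (lacunaryPoly (N (m + 1)) : ℂ⟦X⟧) := by
    simpa using map_dvd Polynomial.coeToPowerSeries.ringHom (X_pow_dvd_lacunaryPoly (N (m + 1)))
  have hmid : coeff (w + (m + 1)) (coeff (α + N (m + 1)) (F * g)) ≠ 0 := by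
    rw [← coeff_tCoeff, tCoeff_add_mul hFw hg, ← htCoeff,
      tCoeff_lacunarySeries_sub_lacunaryTrunc hN, coeff_add_mul_of_X_pow_dvd hα hP,
      Polynomial.coeff_coe]
    exact mul_ne_zero hGα (coeff_lacunaryPoly_self_ne_zero _)
  have hlow : coeff (w + (m + 1)) (coeff (α + N (m + 1)) (φ (Q.eval q))) = 0 := by
    rw [Polynomial.coeToPowerSeries.ringHom_apply, Polynomial.coeff_coe,
      coeff_eval_lacunaryTrunc_eq_zero hN Q (by omega) (hI m (by omega)) (Nat.le_add_left _ _),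
      map_zero]
  obtain ⟨k, hk⟩ := Polynomial.exists_eval₂_add_eq φ Q (φ q) g
  have hhigh : coeff (w + (m + 1)) (coeff (α + N (m + 1)) (k * g ^ 2)) = 0 := by
    refine coeff_coeff_eq_zero_of_C_X_pow_dvd (a := (m + 1) + (m + 1)) ?_ (by omega) _
    rw [pow_add, map_mul, sq]
    exact dvd_mul_of_dvd_right (mul_dvd_mul hg hg) k
  rw [show φ q + g = f from add_sub_cancel _ _, hQ, Polynomial.eval₂_at_apply (p := Q)] at hk
  have := congr(coeff (w + (m + 1)) (coeff (α + N (m + 1)) $hk))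
  rw [map_add, map_add, map_add, map_add, hlow, hhigh, map_zero, map_zero, zero_add,
    add_zero] at this
  exact hmid this.symm

end LacunarySeries

theorem lacunarySeries_transcendental_general
    (N : ℕ → ℕ) (hmono : StrictMono N)
    (hgrow : ∀ d : ℕ, ∃ I : ℕ, ∀ i ≥ I, 2 * d * N i < N (i + 1))
    (Q : Polynomial (Polynomial (PowerSeries ℂ)))
    (hQ : Polynomial.eval₂ Polynomial.coeToPowerSeries.ringHom (lacunarySeries N) Q = 0) :
    Q = 0 :=
  Polynomial.eq_zero_of_eval₂_eq_zero_of_derivative (Polynomial.coe_injective _)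
    (fun _ => LacunarySeries.eval₂_derivative_lacunarySeries_eq_zero hmono hgrow) hQ

/-- If `(N_i)_{i ≥ 1}` is strictly increasing, positive, and for every `d`
eventually `N_{i+1} > 2 d N_i`, then `f(x) = Σ_{i>0} t^i P_{N_i}(x)` is transcendental
over `ℂ((t))(x)`: it satisfies no nonzero polynomial relation over `ℂ[[t]][x]`
(equivalently, over the field of Laurent series in `t` with `x` adjoined). -/
theorem lacunarySeries_transcendental
    (N : ℕ → ℕ) (hmono : StrictMono N) (hpos : 1 ≤ N 1)
    (hgrow : ∀ d : ℕ, ∃ I : ℕ, ∀ i ≥ I, 2 * d * N i < N (i + 1))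
    (Q : Polynomial (Polynomial (PowerSeries ℂ)))
    (hQ : Polynomial.eval₂ Polynomial.coeToPowerSeries.ringHom (lacunarySeries N) Q = 0) :
    Q = 0 :=
  lacunarySeries_transcendental_general N hmono hgrow Q hQ
end

section
/- With f(x) = Σ_{i>0} t^i P_{N_i}(x) where P_k(x) = x^k ∏_{j=1}^k (x - j), for every i > 0 and every integer j with 1 ≤ j ≤ N_i, the value f(j) is a polynomial in t of degree strictly less than i. Consequently, the number of points (x, f(x)) with both coordinates polynomials in t of degree < i and x ∈ {1,...,N_i} ⊆ ℂ ⊆ ℂ[[t]] is at least N_i. -/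
open PowerSeries

noncomputable def lacunaryValue (N : ℕ → ℕ) (z : ℂ) : PowerSeries ℂ :=
  PowerSeries.mk fun i => if i = 0 then 0 else (lacunaryPoly (N i)).eval z

/-!
The polynomial `P_k` vanishes at `1, …, k`. For `j ≤ N i ≤ N s` (with `i ≤ s`) the `t^s`-coefficient
`P_{N_s}(j)` of `f(j)` therefore vanishes, so `f(j)` has `t`-degree `< i`. The points `(j, f(j))`,
`1 ≤ j ≤ N_i`, are pairwise distinct already in their first coordinate.
-/

theorem lacunaryPoly_eval_natCast_eq_zero {j k : ℕ} (hj : 1 ≤ j) (hjk : j ≤ k) :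
    (lacunaryPoly k).eval (j : ℂ) = 0 := by
  have hfactor : (Polynomial.X - Polynomial.C (((j - 1 : ℕ) : ℂ) + 1)).eval (j : ℂ) = 0 := by
    simp [Nat.cast_sub hj]
  rw [lacunaryPoly, Polynomial.eval_mul, Polynomial.eval_prod,
    Finset.prod_eq_zero (Finset.mem_range.mpr (by omega)) hfactor, mul_zero]

theorem coeff_lacunaryValue_natCast_eq_zero {N : ℕ → ℕ} (hN : Monotone N) {i j s : ℕ}
    (hj : 1 ≤ j) (hji : j ≤ N i) (his : i ≤ s) :
    coeff s (lacunaryValue N (j : ℂ)) = 0 := by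
  rw [lacunaryValue, coeff_mk]
  split_ifs
  · rfl
  · exact lacunaryPoly_eval_natCast_eq_zero hj (hji.trans (hN his))

theorem ncard_natCast_graph {R β : Type*} [Semiring R] [CharZero R] (f : ℕ → β) (n : ℕ) :
    Set.ncard {p : PowerSeries R × β | ∃ j : ℕ, 1 ≤ j ∧ j ≤ n ∧ p = (C (j : R), f j)} = n := by
  have hset : {p : PowerSeries R × β | ∃ j : ℕ, 1 ≤ j ∧ j ≤ n ∧ p = (C (j : R), f j)} =
      (fun j : ℕ => (C (j : R), f j)) '' Set.Icc 1 n := by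
    ext p
    simp [eq_comm, and_assoc]
  have hinj : Function.Injective fun j : ℕ => (C (j : R), f j) := fun a b hab =>
    Nat.cast_injective (C_injective (congrArg Prod.fst hab))
  rw [hset, Set.ncard_image_of_injective _ hinj, Set.ncard_eq_toFinset_card', Set.toFinset_Icc,
    Nat.card_Icc, Nat.add_sub_cancel]

theorem lacunaryValue_low_degree_and_many_points_general
    (N : ℕ → ℕ) (hmono : StrictMono N) (i : ℕ) :
    (∀ j : ℕ, 1 ≤ j → j ≤ N i → ∀ s : ℕ, i ≤ s →
        PowerSeries.coeff s (lacunaryValue N (j : ℂ)) = 0) ∧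
    (N i : ℕ) ≤ Set.ncard {p : PowerSeries ℂ × PowerSeries ℂ |
        ∃ j : ℕ, 1 ≤ j ∧ j ≤ N i ∧
          p = (PowerSeries.C (j : ℂ), lacunaryValue N (j : ℂ))} :=
  ⟨fun _ hj hji _ his => coeff_lacunaryValue_natCast_eq_zero hmono.monotone hj hji his,
    (ncard_natCast_graph (fun j : ℕ => lacunaryValue N j) (N i)).ge⟩

/-- for every `i > 0` and every integer `1 ≤ j ≤ N_i`, the value `f(j)` is a
polynomial in `t` of degree `< i` (all `t`-coefficients from place `i` on vanish), and
consequently the set of points `(x, f(x))` with `x ∈ {1, …, N_i} ⊆ ℂ ⊆ ℂ[[t]]` — whose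
coordinates are polynomials in `t` of degree `< i` — has cardinality at least `N_i`. -/
theorem lacunaryValue_low_degree_and_many_points
    (N : ℕ → ℕ) (hmono : StrictMono N) (hpos : 0 < N 1) (i : ℕ) (hi : 0 < i) :
    (∀ j : ℕ, 1 ≤ j → j ≤ N i → ∀ s : ℕ, i ≤ s →
        PowerSeries.coeff s (lacunaryValue N (j : ℂ)) = 0) ∧
    (N i : ℕ) ≤ Set.ncard {p : PowerSeries ℂ × PowerSeries ℂ |
        ∃ j : ℕ, 1 ≤ j ∧ j ≤ N i ∧
          p = (PowerSeries.C (j : ℂ), lacunaryValue N (j : ℂ))} :=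
  lacunaryValue_low_degree_and_many_points_general N hmono i
end

section
/- Let f ∈ O_K⟨x_1,...,x_n⟩ ⊗_{O_K} K with K = ℂ((t)), and fix r ≥ 1. Then there exists an integer N > 0 such that for every x ∈ O_K(r)^n (polynomial tuples of degree < r in t), either f(x) = 0 or ord_t f(x) ≤ N. -/
open PowerSeries

/-- The tuple `x(a) ∈ O_K(r)^n`: the `j`-th coordinate is the polynomial
`Σ_{ℓ<r} a_{jℓ} t^ℓ ∈ ℂ[[t]]` coded by the complex tuple `a`. -/
noncomputable def substTuple (n r : ℕ) (a : Fin n × Fin r → ℂ) (j : Fin n) :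
    PowerSeries ℂ :=
  ∑ ℓ : Fin r, PowerSeries.C (a (j, ℓ)) * (PowerSeries.X : PowerSeries ℂ) ^ (ℓ : ℕ)

/-- The `M`-th partial sum of the substitution `f(x(a))`. -/
noncomputable def substPartialSum (n r : ℕ)
    (f : MvPowerSeries (Fin n) (PowerSeries ℂ)) (M : ℕ)
    (a : Fin n × Fin r → ℂ) : PowerSeries ℂ :=
  MvPolynomial.eval (substTuple n r a)
    (MvPowerSeries.trunc (PowerSeries ℂ)
      (Finsupp.equivFunOnFinite.symm fun _ : Fin n => M) f)

/-!
The `s`-th coefficient of `f(x(a))` is a polynomial `P_s` in the coefficient tuple `a`: only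
the finitely many monomials of `f` whose coefficient has order `≤ s` contribute to it.
By Noetherianity of `ℂ[a]`, some `P_0, …, P_N` generate all the `P_s`, so if the first
`N + 1` coefficients of `f(x(a))` vanish, all of them do.
-/

section Noetherian

variable {R S : Type*} [CommRing R] [CommRing S]

theorem Ideal.exists_forall_mem_span_image_Iic [IsNoetherianRing R] (P : ℕ → R) :
    ∃ N, ∀ s, P s ∈ Ideal.span (P '' Set.Iic N) := by
  let I : ℕ →o Ideal R :=
    ⟨fun N => Ideal.span (P '' Set.Iic N),
      fun _ _ h => Ideal.span_mono (Set.image_mono (Set.Iic_subset_Iic.mpr h))⟩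
  obtain ⟨N, hN⟩ := monotone_stabilizes_iff_noetherian.mpr ‹IsNoetherianRing R› I
  refine ⟨N, fun s => ?_⟩
  have hs : P s ∈ I (max s N) := Ideal.subset_span ⟨s, le_max_left s N, rfl⟩
  rwa [← hN _ (le_max_right s N)] at hs

theorem PowerSeries.exists_forall_eq_zero_or_order_le [IsNoetherianRing R] {ι : Type*}
    (φ : ι → R →+* S) (G : ι → PowerSeries S) (P : ℕ → R)
    (hP : ∀ i s, φ i (P s) = coeff s (G i)) :
    ∃ N : ℕ, ∀ i, G i = 0 ∨ (G i).order ≤ N := by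
  obtain ⟨N, hN⟩ := Ideal.exists_forall_mem_span_image_Iic P
  refine ⟨N, fun i => or_iff_not_imp_right.mpr fun hlt => ?_⟩
  have hker : Ideal.span (P '' Set.Iic N) ≤ RingHom.ker (φ i) := by
    rw [Ideal.span_le]
    rintro - ⟨s, hs, rfl⟩
    rw [SetLike.mem_coe, RingHom.mem_ker, hP]
    exact coeff_of_lt_order s <| (Nat.cast_le.mpr hs).trans_lt (not_le.mp hlt)
  ext s
  rw [map_zero, ← hP, ← RingHom.mem_ker]
  exact hker (hN s)

end Noetherian

section Truncation

variable {σ R : Type*} [CommRing R]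

theorem PowerSeries.coeff_eval_eq_zero_of_lt_order [Fintype σ] (x : σ → PowerSeries R)
    (p : MvPolynomial σ (PowerSeries R)) (s : ℕ)
    (hp : ∀ d, (s : ℕ∞) < (p.coeff d).order) :
    coeff s (MvPolynomial.eval x p) = 0 := by
  rw [MvPolynomial.eval_eq', map_sum]
  refine Finset.sum_eq_zero fun d _ => coeff_of_lt_order s ?_
  exact (hp d).trans_le (le_self_add.trans (le_order_mul _ _))

theorem PowerSeries.coeff_eval_trunc_eq_of_lt_iff [Fintype σ] [DecidableEq σ]
    (f : MvPowerSeries σ (PowerSeries R)) (x : σ → PowerSeries R) (s : ℕ) (c c' : σ →₀ ℕ)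
    (h : ∀ d, (MvPowerSeries.coeff d f).order ≤ s → (d < c ↔ d < c')) :
    coeff s (MvPolynomial.eval x (MvPowerSeries.trunc _ c f)) =
      coeff s (MvPolynomial.eval x (MvPowerSeries.trunc _ c' f)) := by
  rw [← sub_eq_zero, ← map_sub, ← map_sub]
  refine coeff_eval_eq_zero_of_lt_order x _ s fun d => ?_
  rw [MvPolynomial.coeff_sub, MvPowerSeries.coeff_trunc, MvPowerSeries.coeff_trunc]
  by_cases hd : (MvPowerSeries.coeff d f).order ≤ s
  · simp [h d hd]
  · split_ifs <;> simp [order_neg, not_le.mp hd]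

theorem Finsupp.lt_equivFunOnFinite_symm_const_iff [Finite σ] {d : σ →₀ ℕ} {m : ℕ}
    (hd : ∀ j, d j < m) :
    d < Finsupp.equivFunOnFinite.symm (fun _ => m) ↔ Nonempty σ := by
  simp only [Finsupp.lt_def, Finsupp.le_def, Finsupp.equivFunOnFinite_symm_apply_apply]
  exact ⟨fun ⟨_, j, _⟩ => ⟨j⟩, fun ⟨j⟩ => ⟨fun i => (hd i).le, j, hd j⟩⟩

end Truncation

theorem Set.Finite.exists_forall_apply_lt {σ : Type*} {S : Set (σ →₀ ℕ)} (hS : S.Finite) :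
    ∃ B : ℕ, ∀ d ∈ S, ∀ j, d j < B := by
  obtain ⟨b, hb⟩ := (hS.image Finsupp.degree).bddAbove
  exact ⟨b + 1, fun d hd j =>
    Nat.lt_succ_of_le ((Finsupp.le_degree j d).trans (hb ⟨d, hd, rfl⟩))⟩

theorem exists_coeff_substPartialSum_eq (n r : ℕ) (f : MvPowerSeries (Fin n) (PowerSeries ℂ))
    (s : ℕ) (hf : {d : Fin n →₀ ℕ | (MvPowerSeries.coeff d f).order < (s + 1 : ℕ)}.Finite) :
    ∃ B : ℕ, ∀ M ≥ B, ∀ a,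
      coeff s (substPartialSum n r f M a) = coeff s (substPartialSum n r f B a) := by
  obtain ⟨B, hB⟩ := hf.exists_forall_apply_lt
  refine ⟨B, fun M hM a => coeff_eval_trunc_eq_of_lt_iff f _ s _ _ fun d hd => ?_⟩
  have hdB := hB d <| by
    push_cast
    exact (ENat.lt_add_one_iff (ENat.natCast_ne_top s)).mpr hd
  rw [Finsupp.lt_equivFunOnFinite_symm_const_iff hdB,
    Finsupp.lt_equivFunOnFinite_symm_const_iff fun j => (hdB j).trans_le hM]

noncomputable def genericSubstTuple (n r : ℕ) (j : Fin n) :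
    PowerSeries (MvPolynomial (Fin n × Fin r) ℂ) :=
  ∑ ℓ : Fin r, C (MvPolynomial.X (j, ℓ)) * X ^ (ℓ : ℕ)

theorem map_eval_genericSubstTuple (n r : ℕ) (a : Fin n × Fin r → ℂ) (j : Fin n) :
    map (MvPolynomial.eval a) (genericSubstTuple n r j) = substTuple n r a j := by
  simp [genericSubstTuple, substTuple]

theorem exists_eval_eq_coeff_eval_substTuple (n r : ℕ)
    (p : MvPolynomial (Fin n) (PowerSeries ℂ)) (s : ℕ) :
    ∃ Q : MvPolynomial (Fin n × Fin r) ℂ,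
      ∀ a, MvPolynomial.eval a Q = coeff s (MvPolynomial.eval (substTuple n r a) p) := by
  refine ⟨coeff s (MvPolynomial.eval₂Hom (map MvPolynomial.C) (genericSubstTuple n r) p),
    fun a => ?_⟩
  have hid : (map (MvPolynomial.eval a)).comp (map (MvPolynomial.C (σ := Fin n × Fin r))) =
      RingHom.id (PowerSeries ℂ) := by
    ext; simp
  rw [← coeff_map, MvPolynomial.map_eval₂Hom, hid]
  simp [map_eval_genericSubstTuple]

theorem exists_eval_eq_coeff_of_substPartialSum (n r : ℕ)
    (f : MvPowerSeries (Fin n) (PowerSeries ℂ))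
    (hf : ∀ M : ℕ, {d : Fin n →₀ ℕ | (MvPowerSeries.coeff d f).order < (M : ℕ∞)}.Finite)
    (F : (Fin n × Fin r → ℂ) → PowerSeries ℂ)
    (hF : ∀ (a : Fin n × Fin r → ℂ) (s : ℕ), ∃ M₀ : ℕ, ∀ M ≥ M₀,
      coeff s (substPartialSum n r f M a) = coeff s (F a)) :
    ∃ P : ℕ → MvPolynomial (Fin n × Fin r) ℂ,
      ∀ a s, MvPolynomial.eval a (P s) = coeff s (F a) := by
  choose B hB using fun s => exists_coeff_substPartialSum_eq n r f s (hf (s + 1))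
  choose P hP using fun s => exists_eval_eq_coeff_eval_substTuple n r
    (MvPowerSeries.trunc _ (Finsupp.equivFunOnFinite.symm fun _ => B s) f) s
  refine ⟨P, fun a s => ?_⟩
  obtain ⟨M₀, hM₀⟩ := hF a s
  rw [hP, ← hM₀ _ (le_max_left M₀ (B s)), hB s _ (le_max_right _ _)]
  rfl

/-- let `f ∈ O_K⟨x_1,…,x_n⟩` be a restricted power series over
`O_K = ℂ[[t]]` and let `F a = f(x(a))` denote the (t-adically convergent) substituted
value at the tuple of polynomials of degree `< r` coded by `a`. Then there is an integer
`N > 0`, uniform in `a`, such that for every `a` either `f(x(a)) = 0` or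
`ord_t f(x(a)) ≤ N`. (The same bound then holds for `f ⊗ c`, `c ∈ K = ℂ((t))`, since
multiplying by `c` shifts all orders by the constant `ord c`.) -/
theorem uniform_order_bound_of_restricted_substitution
    (n r : ℕ) (f : MvPowerSeries (Fin n) (PowerSeries ℂ))
    (hf : ∀ M : ℕ, {d : Fin n →₀ ℕ |
        (MvPowerSeries.coeff d f).order < (M : ℕ∞)}.Finite)
    (F : (Fin n × Fin r → ℂ) → PowerSeries ℂ)
    (hF : ∀ (a : Fin n × Fin r → ℂ) (s : ℕ), ∃ M₀ : ℕ, ∀ M ≥ M₀,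
      PowerSeries.coeff s (substPartialSum n r f M a) = PowerSeries.coeff s (F a)) :
    ∃ N : ℕ, 0 < N ∧ ∀ a : Fin n × Fin r → ℂ,
      F a = 0 ∨ (F a).order ≤ (N : ℕ∞) := by
  obtain ⟨P, hP⟩ := exists_eval_eq_coeff_of_substPartialSum n r f hf F hF
  obtain ⟨N, hN⟩ := exists_forall_eq_zero_or_order_le (fun a => MvPolynomial.eval a) F P hP
  exact ⟨N + 1, N.succ_pos, fun a =>
    (hN a).imp_right fun h => h.trans (by exact_mod_cast N.le_succ)⟩
end
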